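/- arXiv:1104.3541 — 3 statements merged into one kernel-verified Lean document; each statement's English description precedes it below -/
import Mathlib

section
/- Let g = V₀ ⊕ V₁ be a Lie algebra with [V₀,V₀] ⊆ V₀, [V₀,V₁] ⊆ V₁, [V₁,V₁] ⊆ V₀, and let S be an abelian semigroup with a resonant decomposition S = S₀ ∪ S₁ (S₀S₀ ⊆ S₀, S₀S₁ ⊆ S₁, S₁S₁ ⊆ S₀). Then the subspace (S₀ × V₀) ⊕ (S₁ × V₁) of the S-expanded algebra S × g is closed under the bracket, hence is a Lie subalgebra. -/
/-- The bracket of the `S`-expanded algebra `S × g`, realized on `S → g`. -/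
def exBracket (S : Type*) [Mul S] [Fintype S] [DecidableEq S]
    (g : Type*) [LieRing g] (f₁ f₂ : S → g) : S → g :=
  fun γ => ∑ p : S × S, if p.1 * p.2 = γ then ⁅f₁ p.1, f₂ p.2⁆ else 0

/-- The basis element `λ ⊗ x` of `S × g`, as the function supported at `λ`. -/
def basE {S : Type*} [DecidableEq S] {g : Type*} [Zero g] (l : S) (x : g) : S → g :=
  fun μ => if μ = l then x else 0

section aux
variable {S : Type*} [Mul S] [Fintype S] [DecidableEq S] {g : Type*} [LieRing g]

lemma exBracket_add_right (f a b : S → g) :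
    exBracket S g f (a + b) = exBracket S g f a + exBracket S g f b := by
  funext γ
  simp only [exBracket, Pi.add_apply, lie_add, ← Finset.sum_add_distrib]
  exact Finset.sum_congr rfl (by intro p _; split <;> simp)

lemma exBracket_add_left (f a b : S → g) :
    exBracket S g (a + b) f = exBracket S g a f + exBracket S g b f := by
  funext γ
  simp only [exBracket, Pi.add_apply, add_lie, ← Finset.sum_add_distrib]
  exact Finset.sum_congr rfl (by intro p _; split <;> simp)

lemma exBracket_smul_right {K : Type*} [Field K] [LieAlgebra K g] (k : K) (f a : S → g) :
    exBracket S g f (k • a) = k • exBracket S g f a := by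
  funext γ
  simp only [exBracket, Pi.smul_apply, lie_smul, Finset.smul_sum]
  exact Finset.sum_congr rfl (by intro p _; split <;> simp)

lemma exBracket_smul_left {K : Type*} [Field K] [LieAlgebra K g] (k : K) (f a : S → g) :
    exBracket S g (k • a) f = k • exBracket S g a f := by
  funext γ
  simp only [exBracket, Pi.smul_apply, smul_lie, Finset.smul_sum]
  exact Finset.sum_congr rfl (by intro p _; split <;> simp)

lemma exBracket_zero_right (f : S → g) : exBracket S g f 0 = 0 := by
  funext γ; simp [exBracket]

lemma exBracket_zero_left (f : S → g) : exBracket S g 0 f = 0 := by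
  funext γ; simp [exBracket]

lemma exBracket_basE (l m : S) (v w : g) :
    exBracket S g (basE l v) (basE m w) = basE (l * m) ⁅v, w⁆ := by
  funext γ
  simp only [exBracket, basE]
  rw [Finset.sum_eq_single (l, m)]
  · simp [eq_comm]
  · intro p _ hp
    by_cases h1 : p.1 = l
    · have h2 : p.2 ≠ m := fun h2 => hp (Prod.ext h1 h2)
      simp [h1, h2]
    · simp [h1]
  · simp

end aux

/-- Let `g = V₀ ⊕ V₁` be a Lie algebra with `[V₀,V₀] ⊆ V₀`, `[V₀,V₁] ⊆ V₁`,
`[V₁,V₁] ⊆ V₀`, and let `S` be an abelian semigroup with a resonant decomposition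
`S = S₀ ∪ S₁`.  Then the subspace `(S₀ × V₀) ⊕ (S₁ × V₁)` of the `S`-expanded
algebra is closed under the bracket, hence is a Lie subalgebra. -/
theorem stmt4 (K : Type*) [Field K] (S : Type*) [CommSemigroup S] [Fintype S]
    [DecidableEq S] (g : Type*) [LieRing g] [LieAlgebra K g]
    (V₀ V₁ : Submodule K g) (hcompl : IsCompl V₀ V₁)
    (h00 : ∀ x ∈ V₀, ∀ y ∈ V₀, ⁅x, y⁆ ∈ V₀)
    (h01 : ∀ x ∈ V₀, ∀ y ∈ V₁, ⁅x, y⁆ ∈ V₁)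
    (h11 : ∀ x ∈ V₁, ∀ y ∈ V₁, ⁅x, y⁆ ∈ V₀)
    (S₀ S₁ : Set S) (hcover : S₀ ∪ S₁ = Set.univ)
    (hS00 : ∀ a ∈ S₀, ∀ b ∈ S₀, a * b ∈ S₀)
    (hS01 : ∀ a ∈ S₀, ∀ b ∈ S₁, a * b ∈ S₁)
    (hS11 : ∀ a ∈ S₁, ∀ b ∈ S₁, a * b ∈ S₀) :
    ∀ f₁ ∈ Submodule.span K
        ({f | ∃ l ∈ S₀, ∃ v ∈ V₀, f = basE l v} ∪
         {f | ∃ l ∈ S₁, ∃ v ∈ V₁, f = basE l v} : Set (S → g)),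
      ∀ f₂ ∈ Submodule.span K
        ({f | ∃ l ∈ S₀, ∃ v ∈ V₀, f = basE l v} ∪
         {f | ∃ l ∈ S₁, ∃ v ∈ V₁, f = basE l v} : Set (S → g)),
        exBracket S g f₁ f₂ ∈ Submodule.span K
          ({f | ∃ l ∈ S₀, ∃ v ∈ V₀, f = basE l v} ∪
           {f | ∃ l ∈ S₁, ∃ v ∈ V₁, f = basE l v} : Set (S → g)) := by
  set T : Set (S → g) :=
      ({f | ∃ l ∈ S₀, ∃ v ∈ V₀, f = basE l v} ∪
       {f | ∃ l ∈ S₁, ∃ v ∈ V₁, f = basE l v}) with hT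
  intro f₁ hf₁
  induction hf₁ using Submodule.span_induction with
  | mem f hf =>
      intro f₂ hf₂
      induction hf₂ using Submodule.span_induction with
      | mem f' hf' =>
          apply Submodule.subset_span
          rcases hf with ⟨l, hl, v, hv, rfl⟩ | ⟨l, hl, v, hv, rfl⟩ <;>
            rcases hf' with ⟨m, hm, w, hw, rfl⟩ | ⟨m, hm, w, hw, rfl⟩ <;>
              rw [exBracket_basE]
          · exact Or.inl ⟨l * m, hS00 l hl m hm, _, h00 v hv w hw, rfl⟩
          · exact Or.inr ⟨l * m, hS01 l hl m hm, _, h01 v hv w hw, rfl⟩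
          · refine Or.inr ⟨l * m, mul_comm l m ▸ hS01 m hm l hl, _, ?_, rfl⟩
            have := h01 w hw v hv
            simpa using V₁.neg_mem this
          · exact Or.inl ⟨l * m, hS11 l hl m hm, _, h11 v hv w hw, rfl⟩
      | zero => rw [exBracket_zero_right]; exact Submodule.zero_mem _
      | add a b _ _ ha hb =>
          rw [exBracket_add_right]; exact Submodule.add_mem _ ha hb
      | smul k a _ ha =>
          rw [exBracket_smul_right]; exact Submodule.smul_mem _ k ha
  | zero => intro f₂ _; rw [exBracket_zero_left]; exact Submodule.zero_mem _
  | add a b _ _ ha hb =>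
      intro f₂ hf₂
      rw [exBracket_add_left]
      exact Submodule.add_mem _ (ha f₂ hf₂) (hb f₂ hf₂)
  | smul k a _ ha =>
      intro f₂ hf₂
      rw [exBracket_smul_left]
      exact Submodule.smul_mem _ k (ha f₂ hf₂)
end

section
/- Let g be the 2-dimensional Lie algebra with basis X₁, X₂ and [X₁,X₂] = X₁, graded by V₀ = span{X₂}, V₁ = span{X₁}. Let S = S_K^(3) with resonant decomposition S₀ = {λ2,λ3,λ4}, S₁ = {λ1,λ4}. Then the 0_S-reduction of the resonant subalgebra of S × g is a 3-dimensional Lie algebra with basis Y₁ = λ1⊗X₁, Y₂ = λ2⊗X₂, Y₃ = λ3⊗X₂ satisfying [Y₁,Y₂]=0, [Y₂,Y₃]=0, [Y₃,Y₁]=−Y₁; i.e., it is isomorphic to the Bianchi type III algebra ([X₁,X₂]=[X₂,X₃]=0, [X₁,X₃]=X₁). -/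
/-!
The expanded bracket sends `λα ⊗ x, λβ ⊗ y` to `λαλβ ⊗ [x, y]`. Since `λ1λ2 = λ4`,
`[X₂, X₂] = 0` and `λ3λ1 = λ1` with `[X₂, X₁] = -X₁`, the three relations hold modulo the
ideal `λ4 ⊗ g`. Every element of that ideal vanishes off the `λ4`-component, so the classes of
`λi ⊗ xᵢ` with distinct `i ≠ 4` and `xᵢ ≠ 0` are linearly independent; the generators
`λ4 ⊗ X₁, λ4 ⊗ X₂` of the resonant subalgebra die in the quotient, leaving the span of
`Y₁, Y₂, Y₃`.
-/

/-- The multiplication table of the semigroup `S_K^(3)` on `{λ1,...,λ4}`,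
encoded with `λ_{i+1} ↔ (i : Fin 4)`. -/
def mulSK3 : Fin 4 → Fin 4 → Fin 4 :=
  ![![3, 3, 0, 3],
    ![3, 1, 1, 3],
    ![0, 1, 2, 3],
    ![3, 3, 3, 3]]

/-- The bracket of the expanded algebra on `Fin 4 → g` associated to an explicit
multiplication table `mul`: the bilinear extension of
`[λα ⊗ X, λβ ⊗ Y] = (λα·λβ) ⊗ [X, Y]`. -/
def exBr (mul : Fin 4 → Fin 4 → Fin 4) {g : Type*} [LieRing g]
    (f₁ f₂ : Fin 4 → g) : Fin 4 → g :=
  fun γ => ∑ p : Fin 4 × Fin 4, if mul p.1 p.2 = γ then ⁅f₁ p.1, f₂ p.2⁆ else 0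

section Expansion

variable {S : Type*} [DecidableEq S]

theorem basE_eq_single {g : Type*} [Zero g] (l : S) (x : g) : basE l x = Pi.single l x := by
  funext μ
  simp [basE, Pi.single_apply]

theorem exBr_basE_basE {g : Type*} [LieRing g] (mul : Fin 4 → Fin 4 → Fin 4)
    (α β : Fin 4) (x y : g) :
    exBr mul (basE α x) (basE β y) = basE (mul α β) ⁅x, y⁆ := by
  funext γ
  rw [exBr, Finset.sum_eq_single (α, β)]
  · simp [basE, eq_comm]
  · rintro ⟨a, b⟩ - hab
    obtain ha | hb : a ≠ α ∨ b ≠ β := by simpa only [ne_eq, Prod.mk.injEq, not_and_or] using hab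
    · simp [basE, ha]
    · simp [basE, hb]
  · simp

variable (K : Type*) [Field K] {M : Type*} [AddCommGroup M] [Module K M]

theorem basE_mem_span_basE (s : S) (x : M) :
    basE s x ∈ Submodule.span K {f | ∃ y : M, f = basE s y} :=
  Submodule.subset_span ⟨x, rfl⟩

theorem mkQ_basE_eq_zero (s : S) (x : M) :
    (Submodule.span K {f | ∃ y : M, f = basE s y}).mkQ (basE s x) = 0 :=
  (Submodule.Quotient.mk_eq_zero _).mpr (basE_mem_span_basE K s x)

theorem apply_eq_zero_of_mem_span_basE {s : S} {v : S → M}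
    (hv : v ∈ Submodule.span K {f | ∃ y : M, f = basE s y}) {i : S} (hi : i ≠ s) : v i = 0 := by
  suffices h : Submodule.span K {f | ∃ y : M, f = basE s y} ≤
      LinearMap.ker (LinearMap.proj i : (S → M) →ₗ[K] M) from h hv
  rw [Submodule.span_le]
  rintro _ ⟨y, rfl⟩
  simp [basE, hi]

theorem linearIndependent_mkQ_basE {ι : Type*} [Fintype ι] {s : ι → S}
    (hs : Function.Injective s) {x : ι → M} (hx : ∀ i, x i ≠ 0) {s₀ : S}
    (hs₀ : ∀ i, s i ≠ s₀) :
    LinearIndependent K fun i => (Submodule.span K {f | ∃ y : M, f = basE s₀ y}).mkQ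
      (basE (s i) (x i)) := by
  classical
  rw [Fintype.linearIndependent_iff]
  intro c hc j
  have hmem : ∑ i, c i • basE (s i) (x i) ∈ Submodule.span K {f | ∃ y : M, f = basE s₀ y} := by
    rw [← Submodule.Quotient.mk_eq_zero, ← Submodule.mkQ_apply, map_sum]
    simpa only [map_smul] using hc
  have hj := apply_eq_zero_of_mem_span_basE K hmem (hs₀ j)
  simp_rw [basE_eq_single, Finset.sum_apply, Pi.smul_apply, Pi.single_apply, hs.eq_iff, smul_ite,
    smul_zero, Finset.sum_ite_eq, Finset.mem_univ, if_true] at hj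
  exact (smul_eq_zero.mp hj).resolve_right (hx j)

end Expansion

theorem stmt6_general (K : Type*) [Field K] (g : Type*) [LieRing g] [LieAlgebra K g]
    (X₁ X₂ : g) (hli : LinearIndependent K ![X₁, X₂])
    (hbr : ⁅X₁, X₂⁆ = X₁) :
    let Y₁ : Fin 4 → g := basE 0 X₁
    let Y₂ : Fin 4 → g := basE 1 X₂
    let Y₃ : Fin 4 → g := basE 2 X₂
    -- the ideal `λ4 ⊗ g` giving the `0_S`-reduction
    let I : Submodule K (Fin 4 → g) :=
      Submodule.span K {f | ∃ x : g, f = basE 3 x}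
    -- the resonant subalgebra `(S₀ × V₀) ⊕ (S₁ × V₁)`
    let R : Submodule K (Fin 4 → g) :=
      Submodule.span K {basE 1 X₂, basE 2 X₂, basE 3 X₂, basE 0 X₁, basE 3 X₁}
    (exBr mulSK3 Y₁ Y₂ ∈ I) ∧
    (exBr mulSK3 Y₂ Y₃ ∈ I) ∧
    (exBr mulSK3 Y₃ Y₁ + Y₁ ∈ I) ∧
    LinearIndependent K ![I.mkQ Y₁, I.mkQ Y₂, I.mkQ Y₃] ∧
    Submodule.span K {I.mkQ Y₁, I.mkQ Y₂, I.mkQ Y₃} = R.map I.mkQ := by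
  intro Y₁ Y₂ Y₃ I R
  have hX₂₁ : ⁅X₂, X₁⁆ = -X₁ := by rw [← lie_skew, hbr]
  refine ⟨?_, ?_, ?_, ?_, ?_⟩
  · rw [exBr_basE_basE, hbr]
    exact basE_mem_span_basE K 3 X₁
  · rw [exBr_basE_basE, lie_self, basE_eq_single, Pi.single_zero]
    exact I.zero_mem
  · rw [exBr_basE_basE, hX₂₁, show mulSK3 2 0 = 0 from rfl]
    simp only [Y₁, basE_eq_single, Pi.single_neg, neg_add_cancel]
    exact I.zero_mem
  · have hX : ∀ i, ![X₁, X₂, X₂] i ≠ 0 := by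
      intro i
      fin_cases i
      exacts [hli.ne_zero 0, hli.ne_zero 1, hli.ne_zero 1]
    have hY : ![I.mkQ Y₁, I.mkQ Y₂, I.mkQ Y₃] =
        fun i => I.mkQ (basE (![0, 1, 2] i) (![X₁, X₂, X₂] i)) := by
      funext i
      fin_cases i <;> rfl
    rw [hY]
    exact linearIndependent_mkQ_basE K (s := ![0, 1, 2]) (by decide) hX (s₀ := 3) (by decide)
  · rw [Submodule.map_span]
    simp only [Set.image_insert_eq, Set.image_singleton, I, mkQ_basE_eq_zero]
    refine (Submodule.span_insert_zero (R := K)).symm.trans (congrArg _ ?_)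
    ext
    simp only [Set.mem_insert_iff, Set.mem_singleton_iff]
    tauto

/-- Let `g` be the 2-dimensional Lie algebra with basis `X₁, X₂`, `[X₁,X₂] = X₁`,
graded by `V₀ = span{X₂}`, `V₁ = span{X₁}`.  For `S = S_K^(3)` with resonant
decomposition `S₀ = {λ2,λ3,λ4}`, `S₁ = {λ1,λ4}`, the `0_S`-reduction of the
resonant subalgebra of `S × g` is a 3-dimensional Lie algebra with basis
`Y₁ = λ1⊗X₁`, `Y₂ = λ2⊗X₂`, `Y₃ = λ3⊗X₂` satisfying `[Y₁,Y₂] = 0`, `[Y₂,Y₃] = 0`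
and `[Y₃,Y₁] = -Y₁`, i.e. it is (isomorphic to) the Bianchi type III algebra. -/
theorem stmt6 (K : Type*) [Field K] (g : Type*) [LieRing g] [LieAlgebra K g]
    (X₁ X₂ : g) (hli : LinearIndependent K ![X₁, X₂])
    (hspan : Submodule.span K {X₁, X₂} = ⊤)
    (hbr : ⁅X₁, X₂⁆ = X₁) :
    let Y₁ : Fin 4 → g := basE 0 X₁
    let Y₂ : Fin 4 → g := basE 1 X₂
    let Y₃ : Fin 4 → g := basE 2 X₂
    -- the ideal `λ4 ⊗ g` giving the `0_S`-reduction
    let I : Submodule K (Fin 4 → g) :=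
      Submodule.span K {f | ∃ x : g, f = basE 3 x}
    -- the resonant subalgebra `(S₀ × V₀) ⊕ (S₁ × V₁)`
    let R : Submodule K (Fin 4 → g) :=
      Submodule.span K {basE 1 X₂, basE 2 X₂, basE 3 X₂, basE 0 X₁, basE 3 X₁}
    (exBr mulSK3 Y₁ Y₂ ∈ I) ∧
    (exBr mulSK3 Y₂ Y₃ ∈ I) ∧
    (exBr mulSK3 Y₃ Y₁ + Y₁ ∈ I) ∧
    LinearIndependent K ![I.mkQ Y₁, I.mkQ Y₂, I.mkQ Y₃] ∧
    Submodule.span K {I.mkQ Y₁, I.mkQ Y₂, I.mkQ Y₃} = R.map I.mkQ :=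
  stmt6_general K g X₁ X₂ hli hbr
end

section
/- In any S-expanded algebra S × g of the 2-dimensional Lie algebra g with [X₁,X₂]=X₁, the bracket of any two basis elements λα⊗Xi, λβ⊗Xj is either zero or of the form ±λγ⊗X₁ for a single semigroup element λγ; in particular it is never a sum of two linearly independent basis elements. Consequently, there is no choice of basis elements Y₁=λα⊗Xi, Y₂=λβ⊗Xj, Y₃=λγ⊗Xk in S × g satisfying the Bianchi type IV relations [Y₁,Y₂]=0, [Y₁,Y₃]=Y₁, [Y₂,Y₃]=Y₁+Y₂ with Y₁, Y₂ linearly independent. -/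
lemma exBracket_basE_s13 {S : Type*} [Mul S] [Fintype S] [DecidableEq S]
    {g : Type*} [LieRing g] (α β : S) (x y : g) :
    exBracket S g (basE α x) (basE β y) = basE (α * β) ⁅x, y⁆ := by
  funext γ
  simp only [exBracket, basE]
  rw [Fintype.sum_eq_single (α, β)]
  · rcases eq_or_ne γ (α * β) with h | h
    · simp [h]
    · simp [h, h.symm]
  · intro p hp
    by_cases h1 : p.1 = α <;> by_cases h2 : p.2 = β <;>
      simp_all [Prod.ext_iff]

/-- In any `S`-expanded algebra of the 2-dimensional Lie algebra with
`[X₁,X₂] = X₁`, the bracket of two basis elements `λα⊗Xi`, `λβ⊗Xj` is either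
zero or of the form `±λγ⊗X₁`; consequently no basis elements
`Y₁ = λα⊗Xi`, `Y₂ = λβ⊗Xj`, `Y₃ = λγ⊗Xk` with `Y₁, Y₂` linearly independent
satisfy the Bianchi type IV relations `[Y₁,Y₂]=0`, `[Y₁,Y₃]=Y₁`,
`[Y₂,Y₃]=Y₁+Y₂`. -/
theorem stmt13 (K : Type*) [Field K] (g : Type*) [LieRing g] [LieAlgebra K g]
    (X₁ X₂ : g) (hli : LinearIndependent K ![X₁, X₂]) (hbr : ⁅X₁, X₂⁆ = X₁)
    (S : Type*) [CommSemigroup S] [Fintype S] [DecidableEq S] :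
    let v : Fin 2 → g := ![X₁, X₂]
    (∀ (α β : S) (i j : Fin 2),
      exBracket S g (basE α (v i)) (basE β (v j)) = 0 ∨
      exBracket S g (basE α (v i)) (basE β (v j)) = basE (α * β) X₁ ∨
      exBracket S g (basE α (v i)) (basE β (v j)) = - basE (α * β) X₁) ∧
    ¬ ∃ (α β γ : S) (i j k : Fin 2),
      LinearIndependent K ![(basE α (v i) : S → g), basE β (v j)] ∧
      exBracket S g (basE α (v i)) (basE β (v j)) = 0 ∧
      exBracket S g (basE α (v i)) (basE γ (v k)) = basE α (v i) ∧
      exBracket S g (basE β (v j)) (basE γ (v k)) =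
        basE α (v i) + basE β (v j) := by
  intro v
  have hX1 : X₁ ≠ 0 := hli.ne_zero 0
  have hX2 : X₂ ≠ 0 := hli.ne_zero 1
  have hbr2 : ⁅X₂, X₁⁆ = -X₁ := by rw [← lie_skew, hbr]
  constructor
  · intro α β i j
    rw [exBracket_basE_s13]
    fin_cases i <;> fin_cases j
    · left; show basE (α * β) ⁅X₁, X₁⁆ = 0
      funext μ; simp [basE]
    · right; left; show basE (α * β) ⁅X₁, X₂⁆ = basE (α * β) X₁
      rw [hbr]
    · right; right; show basE (α * β) ⁅X₂, X₁⁆ = - basE (α * β) X₁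
      rw [hbr2]; funext μ; simp [basE]; split <;> simp
    · left; show basE (α * β) ⁅X₂, X₂⁆ = 0
      funext μ; simp [basE]
  · rintro ⟨α, β, γ, i, j, k, hLI, h12, h13, h23⟩
    rw [exBracket_basE_s13] at h12 h13 h23
    have hbz : ⁅v i, v j⁆ = 0 := by
      have := congrFun h12 (α * β)
      simpa [basE] using this
    have hij : i = j := by
      fin_cases i <;> fin_cases j <;>
        simp_all [v, hbr, hbr2, neg_eq_zero]
    subst hij
    have hab : α ≠ β := by
      intro h; subst h
      have h01 : (0 : Fin 2) = 1 := hLI.injective (by simp)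
      exact absurd h01 (by decide)
    have hvi : v i ≠ 0 := by fin_cases i <;> simpa [v]
    by_cases hc : β * γ = α
    · have hne : β ≠ β * γ := by rw [hc]; exact Ne.symm hab
      have := congrFun h23 β
      simp [basE, hne, Ne.symm hab] at this
      first | exact hvi this | exact hvi this.symm
    · have hne : α ≠ β * γ := fun h => hc h.symm
      have := congrFun h23 α
      simp [basE, hne, hab] at this
      first | exact hvi this | exact hvi this.symm
end
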